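/- Let A be a commutative ring, and consider the A-Hopf algebra k[G] = A[x₁₁,x₁₂,x₂₁,x₂₂, 1/D] of GL₂ with comultiplication Δ(x_{ij}) = ∑_k x_{ik} ⊗ x_{kj}. Then the element e = x₁₁x₂₂/D satisfies Δ(D) = D ⊗ D and Δ(e) ≡ e ⊗ e + (1−e) ⊗ (1−e) modulo the ideal J ⊗ k[G] + k[G] ⊗ J, where J = (x₁₁x₁₂, x₂₁x₂₂, x₁₁x₂₁, x₁₂x₂₂) is the defining ideal of the schematic normalizer. -/
import Mathlib


open TensorProduct MvPolynomial

section

variable (A : Type) [CommRing A]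

/-- The polynomial ring `A[x₁₁,x₁₂,x₂₁,x₂₂]` on the matrix entries. -/
noncomputable abbrev GLPoly := MvPolynomial (Fin 2 × Fin 2) A

/-- The determinant `D = x₁₁x₂₂ − x₁₂x₂₁`. -/
noncomputable def detPoly : GLPoly A := X (0, 0) * X (1, 1) - X (0, 1) * X (1, 0)

/-- The coordinate ring `k[G] = A[x_{ij}, 1/D]` of `GL₂`. -/
noncomputable abbrev GLCoord := Localization.Away (detPoly A)

/-- The matrix entries `x i j` as elements of `k[G]`. -/
noncomputable def xg (i j : Fin 2) : GLCoord A :=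
  algebraMap (GLPoly A) (GLCoord A) (X (i, j))

end

set_option maxHeartbeats 1600000 in
/-- in `k[G] = A[x_{ij}, 1/D]` with comultiplication
`Δ(x_{ij}) = ∑_l x_{il} ⊗ x_{lj}`, the element `e = x₁₁x₂₂/D` satisfies
`Δ(D) = D ⊗ D` and `Δ(e) ≡ e⊗e + (1−e)⊗(1−e)` modulo `J⊗k[G] + k[G]⊗J`, where
`J = (x₁₁x₁₂, x₂₁x₂₂, x₁₁x₂₁, x₁₂x₂₂)` is the defining ideal of the schematic
normalizer. -/
theorem comultiplication_of_normalizer_idempotent (A : Type) [CommRing A]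
    (Δ : GLCoord A →ₐ[A] GLCoord A ⊗[A] GLCoord A)
    (hΔ : ∀ i j : Fin 2, Δ (xg A i j) = ∑ l : Fin 2, xg A i l ⊗ₜ[A] xg A l j) :
    let Dg : GLCoord A := algebraMap (GLPoly A) (GLCoord A) (detPoly A)
    let e : GLCoord A := xg A 0 0 * xg A 1 1 * Ring.inverse Dg
    let J : Set (GLCoord A) :=
      {xg A 0 0 * xg A 0 1, xg A 1 0 * xg A 1 1, xg A 0 0 * xg A 1 0,
        xg A 0 1 * xg A 1 1}
    let K : Ideal (GLCoord A ⊗[A] GLCoord A) :=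
      Ideal.span ((fun a => a ⊗ₜ[A] (1 : GLCoord A)) '' J ∪
        (fun a => (1 : GLCoord A) ⊗ₜ[A] a) '' J)
    Δ Dg = Dg ⊗ₜ[A] Dg ∧
    Δ e - (e ⊗ₜ[A] e + (1 - e) ⊗ₜ[A] (1 - e)) ∈ K := by

  intro Dg e J K
  set L : GLCoord A →ₐ[A] GLCoord A ⊗[A] GLCoord A := Algebra.TensorProduct.includeLeft
  set R : GLCoord A →ₐ[A] GLCoord A ⊗[A] GLCoord A := Algebra.TensorProduct.includeRight
  have htm : ∀ x y : GLCoord A, x ⊗ₜ[A] y = L x * R y := by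
    intro x y
    simp [L, R, Algebra.TensorProduct.tmul_mul_tmul]
  have hDg : Dg = xg A 0 0 * xg A 1 1 - xg A 0 1 * xg A 1 0 := by
    show algebraMap (GLPoly A) (GLCoord A) (detPoly A) = _
    simp only [detPoly, map_sub, map_mul]; rfl
  set a := xg A 0 0 with ha
  set b := xg A 0 1 with hb
  set c := xg A 1 0 with hc
  set d := xg A 1 1 with hd
  set i := Ring.inverse Dg with hi
  have hu : IsUnit Dg := IsLocalization.Away.algebraMap_isUnit (detPoly A)
  have hiD : i * Dg = 1 := by rw [hi, mul_comm]; exact Ring.mul_inverse_cancel Dg hu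
  have hΔ00 := hΔ 0 0
  have hΔ01 := hΔ 0 1
  have hΔ10 := hΔ 1 0
  have hΔ11 := hΔ 1 1
  simp only [Fin.sum_univ_two, ← ha, ← hb, ← hc, ← hd] at hΔ00 hΔ01 hΔ10 hΔ11
  have part1 : Δ Dg = Dg ⊗ₜ[A] Dg := by
    rw [hDg, map_sub, map_mul, map_mul, hΔ00, hΔ01, hΔ10, hΔ11]
    simp only [htm, map_sub, map_mul]
    ring
  refine ⟨part1, ?_⟩
  have hΔi : Δ i = i ⊗ₜ[A] i := by
    have h2 : (i ⊗ₜ[A] i) * (Dg ⊗ₜ[A] Dg) = 1 := by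
      rw [Algebra.TensorProduct.tmul_mul_tmul, hiD, ← Algebra.TensorProduct.one_def]
    have h3 : Δ i * (Dg ⊗ₜ[A] Dg) = 1 := by
      rw [← part1, ← map_mul, hiD, map_one]
    calc Δ i = Δ i * ((i ⊗ₜ[A] i) * (Dg ⊗ₜ[A] Dg)) := by rw [h2]; ring
      _ = (Δ i * (Dg ⊗ₜ[A] Dg)) * (i ⊗ₜ[A] i) := by ring
      _ = i ⊗ₜ[A] i := by rw [h3]; ring
  have he : e = a * d * i := rfl
  have h1me : 1 - e = -(b * c * i) := by
    rw [he, ← hiD, hDg]; ring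
  have mem1 : ((1 : GLCoord A) ⊗ₜ[A] (a * b)) ∈ K :=
    Ideal.subset_span (Or.inr ⟨a * b, Or.inl rfl, rfl⟩)
  have mem2 : ((b * d) ⊗ₜ[A] (1 : GLCoord A)) ∈ K :=
    Ideal.subset_span (Or.inl ⟨b * d, Or.inr (Or.inr (Or.inr rfl)), rfl⟩)
  have key : Δ e - (e ⊗ₜ[A] e + (1 - e) ⊗ₜ[A] (1 - e)) =
      ((a * c * i) ⊗ₜ[A] i) * ((1 : GLCoord A) ⊗ₜ[A] (a * b)) +
      (i ⊗ₜ[A] (c * d * i)) * ((b * d) ⊗ₜ[A] (1 : GLCoord A)) := by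
    rw [he, h1me, map_mul, map_mul, hΔ00, hΔ11, hΔi]
    simp only [htm, map_mul, map_neg, map_one]
    ring
  rw [key]
  exact K.add_mem (K.mul_mem_left _ mem1) (K.mul_mem_left _ mem2)
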